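/- Let Σ be a positive semidefinite d×d matrix with spectral decomposition Σ = Σᵢ λᵢ uᵢuᵢ^T (eigenvalues in decreasing order), let σ > 0, and set Σ̃ = Σ + σ²I. Then the minimizer over rank-at-most-k matrices L of ‖ΣΣ̃^{−1/2} − LΣ̃^{1/2}‖_F² is L* = Σ_{i=1}^k (λᵢ/(λᵢ + σ²)) uᵢuᵢ^T, assuming the values λᵢ/√(λᵢ+σ²) are strictly decreasing for i ≤ k. -/

import Mathlib

/-!
On the eigenbasis `u`, `ΣΣ̃^{-1/2}` is diagonal with entries `μᵢ = λᵢ / √(λᵢ + σ²)`, and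
`L* Σ̃^{1/2}` keeps exactly the first `k` of them, so the residual at `L*` has squared Frobenius
norm `∑_{i ≥ k} μᵢ²`. For an arbitrary `L` of rank at most `k`, let `P` be the orthogonal projection
onto the range of `B = L Σ̃^{1/2}`. The column `(ΣΣ̃^{-1/2} - B) uᵢ` is at least as long as
`(1 - P)(μᵢ uᵢ)`, whose squared length is `μᵢ² (1 - tᵢ)` with `tᵢ = ‖P uᵢ‖² ∈ [0, 1]` and
`∑ tᵢ = tr P ≤ k`. As `μᵢ²` decreases, `∑ μᵢ² tᵢ` is at most the sum of the `k` largest `μᵢ²`,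
which is the Eckart–Young bound.
-/

open Matrix

noncomputable def frobSq {d : ℕ} (M : Matrix (Fin d) (Fin d) ℝ) : ℝ :=
  ∑ i, ∑ j, (M i j) ^ 2

open Finset Module WithLp

theorem monotoneOn_sq_div_add {c : ℝ} (hc : 0 < c) :
    MonotoneOn (fun x : ℝ => x ^ 2 / (x + c)) (Set.Ici 0) := by
  intro x (hx : 0 ≤ x) y (hy : 0 ≤ y) hxy
  rw [div_le_div_iff₀ (by positivity) (by positivity)]
  nlinarith [mul_nonneg (mul_nonneg hx hy) (sub_nonneg.2 hxy),
    mul_nonneg hc.le (mul_nonneg (add_nonneg hx hy) (sub_nonneg.2 hxy))]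

theorem sum_mul_le_sum_filter_val_lt_of_antitone {n k : ℕ} {ν t : Fin n → ℝ} (hν : Antitone ν)
    (hν0 : ∀ i, 0 ≤ ν i) (ht0 : ∀ i, 0 ≤ t i) (ht1 : ∀ i, t i ≤ 1) (hts : ∑ i, t i ≤ k) :
    ∑ i, ν i * t i ≤ ∑ i ∈ univ.filter (fun i : Fin n => (i : ℕ) < k), ν i := by
  rcases le_or_gt n k with hnk | hkn
  · rw [filter_true_of_mem fun i _ => i.isLt.trans_le hnk]
    exact sum_le_sum fun i _ => mul_le_of_le_one_right (hν0 i) (ht1 i)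
  -- the weight `c = ν k` separates the first `k` weights from the others
  set c := ν ⟨k, hkn⟩
  have hcard : #(univ.filter (fun i : Fin n => (i : ℕ) < k)) = k := by
    rw [Fin.card_filter_val_lt, min_eq_right hkn.le]
  have hterm (i : Fin n) : ν i * t i ≤ if ↑i < k then ν i + c * (t i - 1) else c * t i := by
    split_ifs with hik
    · have : c ≤ ν i := hν (Fin.mk_le_of_le_val hik.le)
      nlinarith [mul_nonneg (sub_nonneg.2 this) (sub_nonneg.2 (ht1 i))]
    · have : ν i ≤ c := hν (Fin.le_def.2 (not_lt.1 hik))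
      nlinarith [mul_nonneg (sub_nonneg.2 this) (ht0 i)]
  calc ∑ i, ν i * t i ≤ ∑ i : Fin n, (if ↑i < k then ν i + c * (t i - 1) else c * t i) :=
        sum_le_sum fun i _ => hterm i
    _ = ∑ i ∈ univ.filter (fun i : Fin n => (i : ℕ) < k), ν i + c * (∑ i, t i - k) := by
        rw [sum_ite, sum_add_distrib, ← mul_sum, ← mul_sum, sum_sub_distrib, sum_const, hcard,
          ← sum_filter_add_sum_filter_not univ (fun i : Fin n => ↑i < k) t]
        simp only [nsmul_eq_mul, mul_one]
        ring
    _ ≤ ∑ i ∈ univ.filter (fun i : Fin n => (i : ℕ) < k), ν i :=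
        add_le_of_nonpos_right (mul_nonpos_of_nonneg_of_nonpos (hν0 _) (sub_nonpos.2 hts))

section EckartYoung

variable {E : Type*} [NormedAddCommGroup E] [InnerProductSpace ℝ E]

theorem Submodule.sum_norm_starProjection_sq [FiniteDimensional ℝ E] {ι : Type*} [Fintype ι]
    (K : Submodule ℝ E) (b : OrthonormalBasis ι ℝ E) :
    ∑ i, ‖K.starProjection (b i)‖ ^ 2 = finrank ℝ K := by
  have htrace : LinearMap.trace ℝ E K.starProjection = finrank ℝ K := by
    rw [(LinearMap.IsIdempotentElem.isProj_range _ (ContinuousLinearMap.IsIdempotentElem.toLinearMap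
      K.isIdempotentElem_starProjection)).trace]
    erw [K.range_starProjection]
  rw [← htrace, LinearMap.trace_eq_sum_inner _ b]
  refine sum_congr rfl fun i _ => ?_
  rw [real_inner_comm, K.starProjection_apply, ← Submodule.coe_norm,
    ← K.re_inner_starProjection_eq_normSq]
  rfl

theorem Submodule.sq_mul_one_sub_norm_starProjection_sq_le (K : Submodule ℝ E)
    [K.HasOrthogonalProjection] {x y : E} (hx : ‖x‖ = 1) (c : ℝ) (hy : y ∈ K) :
    c ^ 2 * (1 - ‖K.starProjection x‖ ^ 2) ≤ ‖c • x - y‖ ^ 2 := by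
  have hmin : ‖c • x - K.starProjection (c • x)‖ ≤ ‖c • x - y‖ := by
    rw [K.starProjection_minimal]
    exact ciInf_le ⟨0, by rintro _ ⟨z, rfl⟩; positivity⟩ (⟨y, hy⟩ : K)
  have hpyth := K.norm_sq_eq_add_norm_sq_starProjection x
  rw [K.starProjection_orthogonal_val, hx] at hpyth
  calc c ^ 2 * (1 - ‖K.starProjection x‖ ^ 2)
      = ‖c • x - K.starProjection (c • x)‖ ^ 2 := by
        rw [map_smul, ← smul_sub, norm_smul, mul_pow, Real.norm_eq_abs, sq_abs]
        linear_combination c ^ 2 * hpyth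
    _ ≤ ‖c • x - y‖ ^ 2 := by gcongr

theorem OrthonormalBasis.sum_filter_sq_le_sum_norm_sub_sq [FiniteDimensional ℝ E] {n k : ℕ}
    (b : OrthonormalBasis (Fin n) ℝ E) {T B : E →ₗ[ℝ] E} {μ : Fin n → ℝ}
    (hT : ∀ i, T (b i) = μ i • b i) (hμ : Antitone fun i => μ i ^ 2)
    (hB : finrank ℝ (LinearMap.range B) ≤ k) :
    ∑ i ∈ univ.filter (fun i : Fin n => k ≤ (i : ℕ)), μ i ^ 2 ≤
      ∑ i, ‖T (b i) - B (b i)‖ ^ 2 := by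
  set K := LinearMap.range B
  set t := fun i => ‖K.starProjection (b i)‖ ^ 2
  have ht1 (i : Fin n) : t i ≤ 1 := by
    simpa [t, b.orthonormal.1 i] using
      pow_le_pow_left₀ (norm_nonneg _) (K.norm_starProjection_apply_le (b i)) 2
  have hts : ∑ i, t i ≤ k := by
    rw [K.sum_norm_starProjection_sq b]
    exact_mod_cast hB
  have hknapsack := sum_mul_le_sum_filter_val_lt_of_antitone hμ (fun i => sq_nonneg _)
    (fun i => sq_nonneg _) ht1 hts
  have hsplit := sum_filter_add_sum_filter_not univ (fun i : Fin n => (i : ℕ) < k) (μ · ^ 2)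
  calc ∑ i ∈ univ.filter (fun i : Fin n => k ≤ (i : ℕ)), μ i ^ 2
      ≤ ∑ i, μ i ^ 2 * (1 - t i) := by
        simp only [mul_sub, mul_one, sum_sub_distrib, not_lt] at hsplit ⊢
        linarith
    _ ≤ ∑ i, ‖T (b i) - B (b i)‖ ^ 2 := sum_le_sum fun i _ => hT i ▸
        K.sq_mul_one_sub_norm_starProjection_sq_le (b.orthonormal.1 i) (μ i)
          (LinearMap.mem_range_self B _)

end EckartYoung

theorem Matrix.rank_eq_finrank_range_toEuclideanLin {𝕜 m n : Type*} [RCLike 𝕜] [Fintype m]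
    [Fintype n] [DecidableEq n] (A : Matrix m n 𝕜) :
    A.rank = finrank 𝕜 (LinearMap.range (toEuclideanLin A)) := by
  rw [toEuclideanLin_eq_toLin_orthonormal]
  exact rank_eq_finrank_range_toLin _ _ _

theorem Matrix.rank_sum_smul_vecMulVec_le {K m n ι : Type*} [Field K] [Fintype m] [Fintype n]
    [DecidableEq (m → K)] (s : Finset ι) (c : ι → K) (u : ι → m → K) (v : ι → n → K) :
    (∑ i ∈ s, c i • vecMulVec (u i) (v i)).rank ≤ #s := by
  have hrange : LinearMap.range (∑ i ∈ s, c i • vecMulVec (u i) (v i)).mulVecLin ≤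
      Submodule.span K (s.image u : Set (m → K)) := by
    rintro _ ⟨x, rfl⟩
    rw [mulVecLin_apply, sum_mulVec]
    refine Submodule.sum_mem _ fun i hi => ?_
    rw [smul_mulVec, vecMulVec_mulVec, op_smul_eq_smul]
    exact Submodule.smul_mem _ _ (Submodule.smul_mem _ _
      (Submodule.subset_span (mem_coe.2 (mem_image_of_mem u hi))))
  calc _ ≤ finrank K (Submodule.span K (s.image u : Set (m → K))) := Submodule.finrank_mono hrange
    _ ≤ #(s.image u) := finrank_span_finset_le_card _
    _ ≤ #s := card_image_le

theorem frobSq_eq_sum_norm_toEuclideanLin_sq {d : ℕ}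
    (b : OrthonormalBasis (Fin d) ℝ (EuclideanSpace ℝ (Fin d))) (M : Matrix (Fin d) (Fin d) ℝ) :
    frobSq M = ∑ l, ‖toEuclideanLin M (b l)‖ ^ 2 := by
  simp_rw [EuclideanSpace.real_norm_sq_eq]
  rw [frobSq]
  conv_rhs => rw [sum_comm]
  refine sum_congr rfl fun i _ => ?_
  have hrow := b.sum_sq_inner_left (toLp 2 (M i))
  rw [EuclideanSpace.real_norm_sq_eq] at hrow
  rw [← hrow]
  simp [toLpLin_apply, mulVec, EuclideanSpace.inner_eq_star_dotProduct, dotProduct_comm]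

section OrthonormalFamily

variable {d : ℕ} {u : Fin d → Fin d → ℝ}

theorem orthonormal_toLp_of_dotProduct (hu : ∀ i j, u i ⬝ᵥ u j = if i = j then 1 else 0) :
    Orthonormal ℝ fun i => toLp 2 (u i) := by
  rw [orthonormal_iff_ite]
  intro i j
  simpa [EuclideanSpace.inner_toLp_toLp, dotProduct_comm] using hu i j

noncomputable def orthonormalBasisOfDotProduct
    (hu : ∀ i j, u i ⬝ᵥ u j = if i = j then 1 else 0) :
    OrthonormalBasis (Fin d) ℝ (EuclideanSpace ℝ (Fin d)) :=
  OrthonormalBasis.mk (orthonormal_toLp_of_dotProduct hu)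
    ((orthonormal_toLp_of_dotProduct hu).linearIndependent.span_eq_top_of_card_eq_finrank'
      (by simp)).ge

@[simp]
theorem coe_orthonormalBasisOfDotProduct (hu : ∀ i j, u i ⬝ᵥ u j = if i = j then 1 else 0) :
    ⇑(orthonormalBasisOfDotProduct hu) = fun i => toLp 2 (u i) :=
  OrthonormalBasis.coe_mk _ _

theorem sum_smul_vecMulVec_self_mulVec (hu : ∀ i j, u i ⬝ᵥ u j = if i = j then 1 else 0)
    (c : Fin d → ℝ) (l : Fin d) :
    (∑ i, c i • vecMulVec (u i) (u i)) *ᵥ u l = c l • u l := by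
  simp [sum_mulVec, smul_mulVec, vecMulVec_mulVec, hu]

theorem sum_smul_vecMulVec_self_mul_mulVec (hu : ∀ i j, u i ⬝ᵥ u j = if i = j then 1 else 0)
    (a c : Fin d → ℝ) (l : Fin d) :
    ((∑ i, a i • vecMulVec (u i) (u i)) * ∑ i, c i • vecMulVec (u i) (u i)) *ᵥ u l =
      (a l * c l) • u l := by
  rw [← mulVec_mulVec, sum_smul_vecMulVec_self_mulVec hu, mulVec_smul,
    sum_smul_vecMulVec_self_mulVec hu, smul_smul, mul_comm]

theorem frobSq_eq_sum_sq_of_mulVec_eq_smul (hu : ∀ i j, u i ⬝ᵥ u j = if i = j then 1 else 0)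
    {M : Matrix (Fin d) (Fin d) ℝ} {c : Fin d → ℝ} (hM : ∀ i, M *ᵥ u i = c i • u i) :
    frobSq M = ∑ i, c i ^ 2 := by
  rw [frobSq_eq_sum_norm_toEuclideanLin_sq (orthonormalBasisOfDotProduct hu)]
  refine sum_congr rfl fun i _ => ?_
  have hnorm : ‖toLp 2 (u i)‖ = 1 := (orthonormal_toLp_of_dotProduct hu).1 i
  simp [toLpLin_apply, hM, hnorm, norm_smul]

theorem sum_filter_sq_le_frobSq_sub (hu : ∀ i j, u i ⬝ᵥ u j = if i = j then 1 else 0)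
    {k : ℕ} {M B : Matrix (Fin d) (Fin d) ℝ} {μ : Fin d → ℝ} (hM : ∀ i, M *ᵥ u i = μ i • u i)
    (hμ : Antitone fun i => μ i ^ 2) (hB : B.rank ≤ k) :
    ∑ i ∈ univ.filter (fun i : Fin d => k ≤ (i : ℕ)), μ i ^ 2 ≤ frobSq (M - B) := by
  rw [frobSq_eq_sum_norm_toEuclideanLin_sq (orthonormalBasisOfDotProduct hu)]
  simp only [map_sub, LinearMap.sub_apply]
  refine (orthonormalBasisOfDotProduct hu).sum_filter_sq_le_sum_norm_sub_sq (fun i => ?_) hμ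
    (B.rank_eq_finrank_range_toEuclideanLin ▸ hB)
  simp [toLpLin_apply, hM]

end OrthonormalFamily

theorem rank_k_frobenius_minimizer_general
    (d k : ℕ) (σ : ℝ) (hσ : 0 < σ)
    (lam : Fin d → ℝ) (u : Fin d → Fin d → ℝ)
    (hortho : ∀ i j, u i ⬝ᵥ u j = if i = j then (1:ℝ) else 0)
    (hpos : ∀ i, 0 ≤ lam i)
    (hdec : ∀ i j : Fin d, i ≤ j → lam j ≤ lam i)
    (S Shalf Sneghalf Lstar : Matrix (Fin d) (Fin d) ℝ)
    (hS : S = ∑ i, lam i • vecMulVec (u i) (u i))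
    (hShalf : Shalf = ∑ i, Real.sqrt (lam i + σ ^ 2) • vecMulVec (u i) (u i))
    (hSneghalf : Sneghalf = ∑ i, (Real.sqrt (lam i + σ ^ 2))⁻¹ • vecMulVec (u i) (u i))
    (hLstar : Lstar = ∑ i ∈ Finset.univ.filter (fun i : Fin d => (i : ℕ) < k),
        (lam i / (lam i + σ ^ 2)) • vecMulVec (u i) (u i)) :
    Lstar.rank ≤ k ∧
      ∀ L : Matrix (Fin d) (Fin d) ℝ, L.rank ≤ k →
        frobSq (S * Sneghalf - Lstar * Shalf) ≤ frobSq (S * Sneghalf - L * Shalf) := by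
  have hvar (i : Fin d) : 0 < lam i + σ ^ 2 := by have := hpos i; positivity
  set μ : Fin d → ℝ := fun i => lam i / √(lam i + σ ^ 2)
  have hμ : Antitone fun i => μ i ^ 2 := fun i j hij => by
    simp only [μ, div_pow, Real.sq_sqrt (hvar _).le]
    exact monotoneOn_sq_div_add (by positivity) (hpos j) (hpos i) (hdec i j hij)
  have hA (l : Fin d) : (S * Sneghalf) *ᵥ u l = μ l • u l := by
    rw [hS, hSneghalf, sum_smul_vecMulVec_self_mul_mulVec hortho, ← div_eq_mul_inv]
  have hstar (l : Fin d) : (Lstar * Shalf) *ᵥ u l = (if (l : ℕ) < k then μ l else 0) • u l := by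
    simp_rw [hLstar, sum_filter, ← ite_zero_smul]
    rw [hShalf, sum_smul_vecMulVec_self_mul_mulVec hortho]
    split_ifs
    · rw [div_mul_eq_mul_div, mul_div_assoc, Real.sqrt_div_self', mul_one_div]
    · rw [zero_mul]
  refine ⟨hLstar ▸ (rank_sum_smul_vecMulVec_le _ _ _ _).trans ?_, fun L hL => ?_⟩
  · simp [Fin.card_filter_val_lt]
  calc frobSq (S * Sneghalf - Lstar * Shalf)
      = ∑ i ∈ univ.filter (fun i : Fin d => k ≤ (i : ℕ)), μ i ^ 2 := by
        rw [frobSq_eq_sum_sq_of_mulVec_eq_smul hortho fun l => by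
          rw [sub_mulVec, hA, hstar, ← sub_smul], sum_filter]
        refine sum_congr rfl fun i _ => ?_
        by_cases hi : (i : ℕ) < k
        · simp [hi, not_le.2 hi]
        · simp [hi, not_lt.1 hi]
    _ ≤ frobSq (S * Sneghalf - L * Shalf) :=
      sum_filter_sq_le_frobSq_sub hortho hA hμ ((rank_mul_le_left L Shalf).trans hL)

/-- with `Σ = Σᵢ λᵢ uᵢuᵢᵀ` PSD (eigenvalues decreasing), `σ > 0`,
`Σ̃ = Σ + σ²I`, the minimizer over rank-≤k matrices `L` of `‖ΣΣ̃^{−1/2} − LΣ̃^{1/2}‖_F²`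
is `L* = Σ_{i<k} (λᵢ/(λᵢ+σ²)) uᵢuᵢᵀ`, assuming the singular values `λᵢ/√(λᵢ+σ²)` are
strictly decreasing for the leading `k` indices. -/
theorem rank_k_frobenius_minimizer
    (d k : ℕ) (σ : ℝ) (hσ : 0 < σ)
    (lam : Fin d → ℝ) (u : Fin d → Fin d → ℝ)
    (hortho : ∀ i j, u i ⬝ᵥ u j = if i = j then (1:ℝ) else 0)
    (hpos : ∀ i, 0 ≤ lam i)
    (hdec : ∀ i j : Fin d, i ≤ j → lam j ≤ lam i)
    (hstrict : ∀ i j : Fin d, i < j → (j : ℕ) ≤ k →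
        lam j / Real.sqrt (lam j + σ ^ 2) < lam i / Real.sqrt (lam i + σ ^ 2))
    (S Shalf Sneghalf Lstar : Matrix (Fin d) (Fin d) ℝ)
    (hS : S = ∑ i, lam i • vecMulVec (u i) (u i))
    (hShalf : Shalf = ∑ i, Real.sqrt (lam i + σ ^ 2) • vecMulVec (u i) (u i))
    (hSneghalf : Sneghalf = ∑ i, (Real.sqrt (lam i + σ ^ 2))⁻¹ • vecMulVec (u i) (u i))
    (hLstar : Lstar = ∑ i ∈ Finset.univ.filter (fun i : Fin d => (i : ℕ) < k),
        (lam i / (lam i + σ ^ 2)) • vecMulVec (u i) (u i)) :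
    Lstar.rank ≤ k ∧
      ∀ L : Matrix (Fin d) (Fin d) ℝ, L.rank ≤ k →
        frobSq (S * Sneghalf - Lstar * Shalf) ≤ frobSq (S * Sneghalf - L * Shalf) :=
  rank_k_frobenius_minimizer_general d k σ hσ lam u hortho hpos hdec S Shalf Sneghalf Lstar hS
    hShalf hSneghalf hLstar
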